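/- Let i ∈ 𝕊² and (k,l) ∈ T. Then the operator S_{k,l} : A_i(𝔹⁴) → HL(D), defined by S_{k,l}[f] := ((D₁[f,k,l] D₂[f,k,l]; D₃[f,k,l] D₄[f,k,l]), (k,l)), is continuous from (A_i(𝔹⁴), ‖·‖_{A_i}) to (HL(D), d). -/

import Mathlib

noncomputable section

open MeasureTheory Filter

notation "ℍ" => Quaternion ℝ

/-- The set of pure imaginary unit quaternions `𝕊²`. -/
def Sph2 (i : ℍ) : Prop := i.re = 0 ∧ ‖i‖ = 1

/-- Ordered pairs of orthogonal pure imaginary unit quaternions (the set `T`). -/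
def OrthPair (i j : ℍ) : Prop := Sph2 i ∧ Sph2 j ∧ (i * star j).re = 0

/-- The slice complex plane `ℂ(i) = {x + y i}`. -/
def CC (i : ℍ) : Set ℍ := {q | ∃ x y : ℝ, q = (x : ℍ) + y • i}

/-- Slice regularity of `f` on `Ω`: real differentiability together with the
Cauchy–Riemann condition `½(∂/∂x + i ∂/∂y) f = 0` on every slice. -/
def SliceRegularOn (f : ℍ → ℍ) (Ω : Set ℍ) : Prop :=
  ∀ ⦃i : ℍ⦄, Sph2 i → ∀ x y : ℝ, ((x : ℍ) + y • i) ∈ Ω →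
    DifferentiableAt ℝ f ((x : ℍ) + y • i) ∧
    fderiv ℝ f ((x : ℍ) + y • i) 1 + i * fderiv ℝ f ((x : ℍ) + y • i) i = 0

/-- Axially symmetric slice domain. -/
structure AxSymSDomain (Ω : Set ℍ) : Prop where
  isOpen : IsOpen Ω
  isConnected : IsConnected Ω
  real_nonempty : (Ω ∩ Set.range ((↑) : ℝ → ℍ)).Nonempty
  slice_connected : ∀ ⦃i : ℍ⦄, Sph2 i →
    IsConnected {p : ℝ × ℝ | ((p.1 : ℍ) + p.2 • i) ∈ Ω}
  axial : ∀ (x y : ℝ) ⦃i : ℍ⦄, Sph2 i → ((x : ℍ) + y • i) ∈ Ω →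
    ∀ ⦃j : ℍ⦄, Sph2 j → ((x : ℍ) + y • j) ∈ Ω

/-- The slice `Ω ∩ ℂ(i)` as a subset of `ℝ²`. -/
def sliceSet (Ω : Set ℍ) (i : ℍ) : Set (ℝ × ℝ) := {p | ((p.1 : ℍ) + p.2 • i) ∈ Ω}

/-- `‖f‖²_{A_i(Ω)} = ∫_{Ω ∩ ℂ(i)} ‖f‖² dσ_i`. -/
def bergmanNormSq (Ω : Set ℍ) (i : ℍ) (f : ℍ → ℍ) : ℝ :=
  ∫ p in sliceSet Ω i, ‖f ((p.1 : ℍ) + p.2 • i)‖ ^ 2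

/-- The slice regular Bergman norm `‖f‖_{A_i(Ω)}`. -/
def bergmanNorm (Ω : Set ℍ) (i : ℍ) (f : ℍ → ℍ) : ℝ :=
  Real.sqrt (bergmanNormSq Ω i f)

/-- Membership in the slice regular Bergman space `A_i(Ω)`. -/
def MemBergman (Ω : Set ℍ) (i : ℍ) (f : ℍ → ℍ) : Prop :=
  SliceRegularOn f Ω ∧
  IntegrableOn (fun p : ℝ × ℝ => ‖f ((p.1 : ℍ) + p.2 • i)‖ ^ 2) (sliceSet Ω i)

/-- The quaternionic Bergman inner product `⟨f,g⟩ = ∫ conj(f) g dσ_i`. -/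
def bergmanInner (Ω : Set ℍ) (i : ℍ) (f g : ℍ → ℍ) : ℍ :=
  ∫ p in sliceSet Ω i, star (f ((p.1 : ℍ) + p.2 • i)) * g ((p.1 : ℍ) + p.2 • i)

/-- The open unit ball `𝔹⁴ ⊆ ℍ`. -/
def B4 : Set ℍ := {q | ‖q‖ < 1}

/-- The open unit disk `D ⊆ ℝ²`. -/
def unitDisk : Set (ℝ × ℝ) := {p | p.1 ^ 2 + p.2 ^ 2 < 1}

/-- `‖f‖²_{A_i(𝔹⁴)} = ∫_D ‖f(x + yi)‖² dμ(x,y)`. -/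
def bergNormSqB (i : ℍ) (f : ℍ → ℍ) : ℝ :=
  ∫ p in unitDisk, ‖f ((p.1 : ℍ) + p.2 • i)‖ ^ 2

/-- The Bergman norm on `A_i(𝔹⁴)`. -/
def bergNormB (i : ℍ) (f : ℍ → ℍ) : ℝ := Real.sqrt (bergNormSqB i f)

/-- Membership in `A_i(𝔹⁴)`. -/
def MemBergB (i : ℍ) (f : ℍ → ℍ) : Prop :=
  SliceRegularOn f B4 ∧
  IntegrableOn (fun p : ℝ × ℝ => ‖f ((p.1 : ℍ) + p.2 • i)‖ ^ 2) unitDisk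

open Classical in
/-- `I_q`: the imaginary unit direction of `q` (an arbitrary fixed unit when `q` is real). -/
def Imu (q : ℍ) : ℍ := if q.im = 0 then ⟨0, 1, 0, 0⟩ else ‖q.im‖⁻¹ • q.im

/-- The extension operator `P_{k,·}`: for a slice function `g : ℝ² → ℍ` (representing
`x + y k ↦ g(x,y)`), `Pext k g (q) = ½[(1 + I_q k) g(x, −y) + (1 − I_q k) g(x, y)]`
where `q = x + I_q y`, `y = ‖im q‖ ≥ 0`. -/
def Pext (k : ℍ) (g : ℝ × ℝ → ℍ) (q : ℍ) : ℍ :=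
  (2⁻¹ : ℝ) • ((1 + Imu q * k) * g (q.re, -‖q.im‖) + (1 - Imu q * k) * g (q.re, ‖q.im‖))

/-- The slice function `x + y k ↦ a + b k + c l + d kl`. -/
def sliceFun (a b c d : ℝ × ℝ → ℝ) (k l : ℍ) (p : ℝ × ℝ) : ℍ :=
  (a p : ℍ) + b p • k + c p • l + d p • (k * l)

/-- `L²(D)` norm of a real function on the unit disk. -/
def L2D (a : ℝ × ℝ → ℝ) : ℝ := Real.sqrt (∫ p in unitDisk, a p ^ 2)

/-- Finiteness of the `L²(D)` norm. -/
def MemL2D (a : ℝ × ℝ → ℝ) : Prop := IntegrableOn (fun p => a p ^ 2) unitDisk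

/-- Harmonicity on the unit disk: `a` is `C²` and `∂²a/∂x² + ∂²a/∂y² = 0`. -/
def HarmonicOnDisk (a : ℝ × ℝ → ℝ) : Prop :=
  ContDiffOn ℝ 2 a unitDisk ∧ ∀ p ∈ unitDisk,
    fderiv ℝ (fun q => fderiv ℝ a q (1, 0)) p (1, 0)
      + fderiv ℝ (fun q => fderiv ℝ a q (0, 1)) p (0, 1) = 0

/-- `(a,b)` is a pair of conjugate harmonic functions on `D`:
both harmonic and satisfying the Cauchy–Riemann equations. -/
def ConjHarmPair (a b : ℝ × ℝ → ℝ) : Prop :=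
  HarmonicOnDisk a ∧ HarmonicOnDisk b ∧
  ∀ p ∈ unitDisk,
    fderiv ℝ a p (1, 0) = fderiv ℝ b p (0, 1) ∧
    fderiv ℝ a p (0, 1) = -fderiv ℝ b p (1, 0)

/-- `(a,b) ∈ HL²(D)`. -/
def HLpair (a b : ℝ × ℝ → ℝ) : Prop := ConjHarmPair a b ∧ MemL2D a ∧ MemL2D b

/-- Raw data of an element of `HL(D)`: a 2×2 matrix `(a b; c d)` of real functions
on the disk together with a pair `(k,l)` of quaternions. -/
structure HLElem where
  a : ℝ × ℝ → ℝ
  b : ℝ × ℝ → ℝ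
  c : ℝ × ℝ → ℝ
  d : ℝ × ℝ → ℝ
  k : ℍ
  l : ℍ

/-- Membership in `HL(D)`: `(a,b),(c,d) ∈ HL²(D)` and `(k,l) ∈ T`. -/
def HLElem.mem (A : HLElem) : Prop := HLpair A.a A.b ∧ HLpair A.c A.d ∧ OrthPair A.k A.l

/-- The bundle projection `P_{𝔹⁴}((a b; c d),(k,l)) = P_{k,l}[a + bk + cl + dkl]`. -/
def HLElem.proj (A : HLElem) : ℍ → ℍ := Pext A.k (sliceFun A.a A.b A.c A.d A.k A.l)

/-- The metric of `HL(D)`. -/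
def HLdist (A B : HLElem) : ℝ :=
  L2D (A.a - B.a) + L2D (A.b - B.b) + L2D (A.c - B.c) + L2D (A.d - B.d)
    + Real.sqrt (‖A.k - B.k‖ ^ 2 + ‖A.l - B.l‖ ^ 2)

/-- `Q_{k,l}[f] : (x,y) ↦ f(x + y k)`, the restriction of `f` to the slice `ℂ(k)`. -/
def Qsl (f : ℍ → ℍ) (k : ℍ) (p : ℝ × ℝ) : ℍ := f ((p.1 : ℍ) + p.2 • k)

/-- `D₁[f,k,l] = (Q[f] + conj(Q[f]))/2 = Re (Q[f])`. -/
def Dc1 (f : ℍ → ℍ) (k _l : ℍ) (p : ℝ × ℝ) : ℝ := (Qsl f k p).re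

/-- `D₂[f,k,l] = −(Q[f]·k + conj(Q[f]·k))/2 = −Re (Q[f]·k)`. -/
def Dc2 (f : ℍ → ℍ) (k _l : ℍ) (p : ℝ × ℝ) : ℝ := -(Qsl f k p * k).re

/-- `D₃[f,k,l] = −(Q[f]·l + conj(Q[f]·l))/2 = −Re (Q[f]·l)`. -/
def Dc3 (f : ℍ → ℍ) (k l : ℍ) (p : ℝ × ℝ) : ℝ := -(Qsl f k p * l).re

/-- `D₄[f,k,l] = (Q[f]·lk + conj(Q[f]·lk))/2 = Re (Q[f]·(lk))`. -/
def Dc4 (f : ℍ → ℍ) (k l : ℍ) (p : ℝ × ℝ) : ℝ := (Qsl f k p * (l * k)).re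

/-- The section map `S_{k,l}[f] = ((D₁ D₂; D₃ D₄), (k,l))`. -/
def Smap (f : ℍ → ℍ) (k l : ℍ) : HLElem :=
  ⟨Dc1 f k l, Dc2 f k l, Dc3 f k l, Dc4 f k l, k, l⟩

/-- The metric `ρ_i` on `A_i(𝔹⁴) × T`. -/
def rhoA (i : ℍ) (f : ℍ → ℍ) (k l : ℍ) (g : ℍ → ℍ) (m n : ℍ) : ℝ :=
  bergNormB i (f - g) + Real.sqrt (‖k - m‖ ^ 2 + ‖l - n‖ ^ 2)


/-!
Restricted to a slice `ℂ(j)`, a slice regular function is holomorphic for the complex structure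
given by left multiplication by `j`, and this forces the representation formula
`2 f(x + yk) = (1 - ki) f(x + yi) + (1 + ki) f(x - yi)`: the difference of the two sides is
holomorphic for left multiplication by `k` and vanishes on the real axis, and every real-linear
map `ℍ → ℂ` that turns left multiplication by `k` into multiplication by `I` carries it to a
classical holomorphic function, which then vanishes by the identity theorem. Hence
`‖f(x + yk)‖ ≤ ‖f(x + yi)‖ + ‖f(x - yi)‖`, and since `(x, y) ↦ (x, -y)` is a
measure-preserving symmetry of `D`, the `L²(D)` norm of `Q_{k,l}[f]` is at most `2 ‖f‖_{A_i}`.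
Each `Dⱼ[f,k,l]` is `Re (Q_{k,l}[f] c)` for a unit quaternion `c`, so `S_{k,l}` is Lipschitz
with constant `8` (its `(k,l)` component is constant), and the theorem holds with `δ = ε / 8`.
-/

open Topology

lemma Quaternion.re_mul_comm (a b : ℍ) : (a * b).re = (b * a).re := by
  simp only [Quaternion.re_mul]; ring

lemma Quaternion.abs_re_le_norm (q : ℍ) : |q.re| ≤ ‖q‖ := by
  simpa [Quaternion.inner_def] using abs_real_inner_le_norm q 1

lemma Complex.norm_lt_one_iff_re_sq_add_im_sq (z : ℂ) :
    ‖z‖ < 1 ↔ z.re ^ 2 + z.im ^ 2 < 1 := by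
  rw [← sq_lt_one_iff₀ (norm_nonneg _), Complex.sq_norm, Complex.normSq_apply, sq, sq]

lemma Sph2.mul_self {j : ℍ} (hj : Sph2 j) : j * j = -1 := by
  have h := Quaternion.self_mul_star j
  rw [Quaternion.star_eq_neg.2 hj.1, mul_neg, Quaternion.normSq_eq_norm_mul_self, hj.2,
    mul_one, neg_eq_iff_eq_neg] at h
  simpa using h

lemma Sph2.normSq_coe_add_smul {j : ℍ} (hj : Sph2 j) (x y : ℝ) :
    Quaternion.normSq ((x : ℍ) + y • j) = x ^ 2 + y ^ 2 := by
  have hj1 : Quaternion.normSq j = 1 := by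
    rw [Quaternion.normSq_eq_norm_mul_self, hj.2, mul_one]
  rw [Quaternion.normSq_def'] at hj1 ⊢
  simp only [Quaternion.re_add, Quaternion.re_coe, Quaternion.re_smul, hj.1,
    Quaternion.imI_add, Quaternion.imI_coe, Quaternion.imI_smul, zero_add,
    Quaternion.imJ_add, Quaternion.imJ_coe, Quaternion.imJ_smul, Quaternion.imK_add,
    Quaternion.imK_coe, Quaternion.imK_smul, smul_eq_mul] at hj1 ⊢
  linear_combination y ^ 2 * hj1

lemma Sph2.coe_add_smul_mem_B4_iff {j : ℍ} (hj : Sph2 j) (x y : ℝ) :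
    (x : ℍ) + y • j ∈ B4 ↔ x ^ 2 + y ^ 2 < 1 := by
  rw [B4, Set.mem_ofPred_eq, ← hj.normSq_coe_add_smul, Quaternion.normSq_eq_norm_mul_self,
    ← sq, sq_lt_one_iff₀ (norm_nonneg _)]

lemma Sph2.sliceSet_B4 {j : ℍ} (hj : Sph2 j) : sliceSet B4 j = unitDisk := by
  ext p
  exact hj.coe_add_smul_mem_B4_iff p.1 p.2

def sliceEmb (j : ℍ) : ℂ →L[ℝ] ℍ :=
  Complex.reCLM.smulRight (1 : ℍ) + Complex.imCLM.smulRight j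

@[simp]
lemma sliceEmb_apply (j : ℍ) (z : ℂ) : sliceEmb j z = (z.re : ℍ) + z.im • j := by
  simp [sliceEmb, ← Algebra.algebraMap_eq_smul_one, Quaternion.algebraMap_def]

def IsLeftHolomorphicAt (k : ℍ) (W : ℂ → ℍ) (z : ℂ) : Prop :=
  ∃ L : ℂ →L[ℝ] ℍ, HasFDerivAt W L z ∧ L Complex.I = k * L 1

namespace IsLeftHolomorphicAt

variable {j k : ℍ} {V W : ℂ → ℍ} {z : ℂ}

lemma sub (hV : IsLeftHolomorphicAt k V z) (hW : IsLeftHolomorphicAt k W z) :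
    IsLeftHolomorphicAt k (fun w => V w - W w) z := by
  obtain ⟨L, hL, hLI⟩ := hV
  obtain ⟨M, hM, hMI⟩ := hW
  exact ⟨L - M, hL.sub hM, by simp [hLI, hMI, mul_sub]⟩

lemma const_mul {c : ℍ} (hc : c * j = k * c) (hW : IsLeftHolomorphicAt j W z) :
    IsLeftHolomorphicAt k (fun w => c * W w) z := by
  obtain ⟨L, hL, hLI⟩ := hW
  refine ⟨(ContinuousLinearMap.mul ℝ ℍ c).comp L,
    (ContinuousLinearMap.mul ℝ ℍ c).hasFDerivAt.comp z hL, ?_⟩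
  simp [hLI, ← mul_assoc, hc]

lemma comp_conj (hW : IsLeftHolomorphicAt j W (starRingEnd ℂ z)) :
    IsLeftHolomorphicAt (-j) (fun w => W (starRingEnd ℂ w)) z := by
  obtain ⟨L, hL, hLI⟩ := hW
  refine ⟨L.comp Complex.conjCLE.toContinuousLinearMap,
    hL.comp z Complex.conjCLE.toContinuousLinearMap.hasFDerivAt, ?_⟩
  simp [hLI]

end IsLeftHolomorphicAt

def complexProj (k a : ℍ) : ℍ →L[ℝ] ℂ :=
  LinearMap.toContinuousLinearMap
    { toFun := fun q => ⟨(q * a).re, -(q * a * k).re⟩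
      map_add' := fun q r => by apply Complex.ext <;> simp [add_mul, -Quaternion.re_mul]; ring
      map_smul' := fun r q => by apply Complex.ext <;> simp [-Quaternion.re_mul] }

@[simp]
lemma complexProj_apply (k a q : ℍ) : complexProj k a q = ⟨(q * a).re, -(q * a * k).re⟩ :=
  rfl

lemma complexProj_mul_left {k : ℍ} (hk : k * k = -1) (a q : ℍ) :
    complexProj k a (k * q) = Complex.I * complexProj k a q := by
  have hcyc (x : ℍ) : (k * x).re = (x * k).re := Quaternion.re_mul_comm k x
  apply Complex.ext <;> simp [mul_assoc, hcyc, hk]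

lemma frequently_ofReal_nhdsNE_zero {p : ℂ → Prop} (hp : ∀ t : ℝ, p t) :
    ∃ᶠ z in 𝓝[≠] (0 : ℂ), p z := by
  have hlim : Tendsto ((↑) : ℝ → ℂ) (𝓝[≠] 0) (𝓝[≠] 0) :=
    tendsto_nhdsWithin_of_tendsto_nhds_of_eventually_within _
      ((Complex.continuous_ofReal.tendsto' 0 0 Complex.ofReal_zero).mono_left
        nhdsWithin_le_nhds)
      (eventually_nhdsWithin_of_forall fun t ht => Complex.ofReal_ne_zero.2 ht)
  exact hlim.frequently (Eventually.of_forall hp).frequently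

theorem IsLeftHolomorphicAt.eqOn_zero {k : ℍ} (hk : k * k = -1) {W : ℂ → ℍ} {U : Set ℂ}
    (hU : IsOpen U) (hUc : IsPreconnected U) (h0 : (0 : ℂ) ∈ U)
    (hW : ∀ z ∈ U, IsLeftHolomorphicAt k W z) (hreal : ∀ t : ℝ, W t = 0) :
    Set.EqOn W 0 U := by
  have hproj (a : ℍ) : Set.EqOn (fun z => complexProj k a (W z)) 0 U := by
    have hdiff : DifferentiableOn ℂ (fun z => complexProj k a (W z)) U := fun z hz => by
      obtain ⟨L, hL, hLI⟩ := hW z hz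
      have hCR : ((complexProj k a).comp L) Complex.I
          = Complex.I • ((complexProj k a).comp L) 1 := by
        simp only [ContinuousLinearMap.comp_apply, hLI, complexProj_mul_left hk, smul_eq_mul]
      exact (((complexProj k a).hasFDerivAt.comp z hL).complexOfReal_hasFDerivAt hCR)
        |>.differentiableAt.differentiableWithinAt
    refine (hdiff.analyticOnNhd hU).eqOn_zero_of_preconnected_of_frequently_eq_zero hUc h0 ?_
    exact frequently_ofReal_nhdsNE_zero fun t => by
      simp only [hreal t, zero_mul, Quaternion.re_zero, neg_zero, complexProj_apply]; rfl
  intro z hz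
  -- the real part of `complexProj k (star w) w` is `‖w‖²`
  have h := congrArg Complex.re (hproj (star (W z)) hz)
  simp only [complexProj_apply, Pi.zero_apply, Complex.zero_re, Quaternion.self_mul_star,
    Quaternion.re_coe, Quaternion.normSq_eq_zero] at h
  exact h

lemma SliceRegularOn.isLeftHolomorphicAt {f : ℍ → ℍ} {Ω : Set ℍ} (hf : SliceRegularOn f Ω)
    {j : ℍ} (hj : Sph2 j) {z : ℂ} (hz : (z.re : ℍ) + z.im • j ∈ Ω) :
    IsLeftHolomorphicAt j (fun w => f (sliceEmb j w)) z := by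
  obtain ⟨hd, hcr⟩ := hf hj z.re z.im hz
  rw [← sliceEmb_apply] at hd hcr
  refine ⟨(fderiv ℝ f _).comp (sliceEmb j), hd.hasFDerivAt.comp z (sliceEmb j).hasFDerivAt, ?_⟩
  have hcr' : fderiv ℝ f (sliceEmb j z) j = j * fderiv ℝ f (sliceEmb j z) 1 := by
    have h := congrArg (j * ·) hcr
    simp only [mul_add, mul_zero, ← mul_assoc, hj.mul_self, neg_one_mul] at h
    exact (add_neg_eq_zero.mp h).symm
  simpa using hcr'

theorem SliceRegularOn.representation {f : ℍ → ℍ} (hf : SliceRegularOn f B4) {i k : ℍ}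
    (hi : Sph2 i) (hk : Sph2 k) {x y : ℝ} (hxy : x ^ 2 + y ^ 2 < 1) :
    2 * f (x + y • k) = (1 - k * i) * f (x + y • i) + (1 + k * i) * f (x + (-y) • i) := by
  set W : ℂ → ℍ := fun w => 2 * f (sliceEmb k w) - (1 - k * i) * f (sliceEmb i w)
    - (1 + k * i) * f (sliceEmb i (starRingEnd ℂ w))
  have hkk (q : ℍ) : k * (k * q) = -q := by rw [← mul_assoc, hk.mul_self, neg_one_mul]
  have hmem {j : ℍ} (hj : Sph2 j) {w : ℂ} (hw : ‖w‖ < 1) : (w.re : ℍ) + w.im • j ∈ B4 :=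
    (hj.coe_add_smul_mem_B4_iff _ _).2 ((Complex.norm_lt_one_iff_re_sq_add_im_sq w).1 hw)
  have hW : ∀ z ∈ Metric.ball (0 : ℂ) 1, IsLeftHolomorphicAt k W z := fun z hz => by
    rw [mem_ball_zero_iff] at hz
    refine (((hf.isLeftHolomorphicAt hk (hmem hk hz)).const_mul ?_).sub
      ((hf.isLeftHolomorphicAt hi (hmem hi hz)).const_mul ?_)).sub
      ((hf.isLeftHolomorphicAt hi
        (hmem hi ((Complex.norm_conj z).trans_lt hz))).comp_conj.const_mul ?_)
    · rw [two_mul, mul_two]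
    · simp only [sub_mul, mul_sub, one_mul, mul_one, mul_assoc, hi.mul_self, hkk, mul_neg]; abel
    · simp only [add_mul, mul_add, one_mul, mul_one, mul_neg, mul_assoc, hi.mul_self, hkk]; abel
  have hzero := IsLeftHolomorphicAt.eqOn_zero hk.mul_self Metric.isOpen_ball
    (convex_ball 0 1).isPreconnected (Metric.mem_ball_self one_pos) hW fun t => by
      simp only [W, Complex.conj_ofReal, sliceEmb_apply, Complex.ofReal_re, Complex.ofReal_im,
        zero_smul]
      noncomm_ring
  have hxy' : (⟨x, y⟩ : ℂ) ∈ Metric.ball (0 : ℂ) 1 := by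
    rwa [mem_ball_zero_iff, Complex.norm_lt_one_iff_re_sq_add_im_sq]
  have h := hzero hxy'
  simp only [W, sliceEmb_apply, Complex.conj_re, Complex.conj_im, Pi.zero_apply,
    sub_sub, sub_eq_zero] at h
  exact h

lemma SliceRegularOn.norm_le {f : ℍ → ℍ} (hf : SliceRegularOn f B4) {i k : ℍ}
    (hi : Sph2 i) (hk : Sph2 k) {x y : ℝ} (hxy : x ^ 2 + y ^ 2 < 1) :
    ‖f (x + y • k)‖ ≤ ‖f (x + y • i)‖ + ‖f (x + (-y) • i)‖ := by
  have hki : ‖k * i‖ = 1 := by rw [norm_mul, hk.2, hi.2, one_mul]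
  have h1 : ‖1 - k * i‖ ≤ 2 := (norm_sub_le _ _).trans (by rw [norm_one, hki]; norm_num)
  have h2 : ‖1 + k * i‖ ≤ 2 := (norm_add_le _ _).trans (by rw [norm_one, hki]; norm_num)
  have h := congrArg norm (hf.representation hi hk hxy)
  rw [two_mul, ← two_smul ℝ, norm_smul, Real.norm_two] at h
  calc ‖f (x + y • k)‖
        = 2⁻¹ * ‖(1 - k * i) * f (x + y • i) + (1 + k * i) * f (x + (-y) • i)‖ := by
          rw [← h]; ring
    _ ≤ 2⁻¹ * (2 * ‖f (x + y • i)‖ + 2 * ‖f (x + (-y) • i)‖) := by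
        gcongr
        refine (norm_add_le _ _).trans (add_le_add ?_ ?_) <;> rw [norm_mul] <;> gcongr
    _ = ‖f (x + y • i)‖ + ‖f (x + (-y) • i)‖ := by ring

lemma setIntegral_sq_le_of_abs_le_add {α : Type*} [MeasurableSpace α] {μ : Measure α}
    {s : Set α} (hs : MeasurableSet s) {e a b : α → ℝ}
    (ha : IntegrableOn (fun x => a x ^ 2) s μ) (hb : IntegrableOn (fun x => b x ^ 2) s μ)
    (h : ∀ x ∈ s, |e x| ≤ a x + b x) :
    ∫ x in s, e x ^ 2 ∂μ ≤ 2 * ∫ x in s, a x ^ 2 ∂μ + 2 * ∫ x in s, b x ^ 2 ∂μ := by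
  rw [← integral_const_mul, ← integral_const_mul,
    ← integral_add (ha.const_mul 2) (hb.const_mul 2)]
  refine integral_mono_of_nonneg (Eventually.of_forall fun x => sq_nonneg _)
    ((ha.const_mul 2).add (hb.const_mul 2)) ((ae_restrict_iff' hs).2 ?_)
  refine Eventually.of_forall fun x hx => ?_
  have hab : e x ^ 2 ≤ (a x + b x) ^ 2 := by
    rw [← sq_abs]; exact pow_le_pow_left₀ (abs_nonneg _) (h x hx) 2
  nlinarith [sq_nonneg (a x - b x)]

lemma isOpen_unitDisk : IsOpen unitDisk :=
  isOpen_lt (by fun_prop) continuous_const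

lemma measurePreserving_prodMap_id_neg :
    MeasurePreserving (Prod.map id Neg.neg : ℝ × ℝ → ℝ × ℝ) volume volume :=
  (MeasurePreserving.id volume).prod (Measure.measurePreserving_neg volume)

lemma measurableEmbedding_prodMap_id_neg :
    MeasurableEmbedding (Prod.map id Neg.neg : ℝ × ℝ → ℝ × ℝ) :=
  ((Homeomorph.refl ℝ).prodCongr (Homeomorph.neg ℝ)).measurableEmbedding

lemma preimage_prodMap_id_neg_unitDisk : Prod.map id Neg.neg ⁻¹' unitDisk = unitDisk := by
  ext p
  simp [unitDisk]

lemma integrableOn_unitDisk_comp_neg_snd {F : ℝ × ℝ → ℝ} (hF : IntegrableOn F unitDisk) :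
    IntegrableOn (fun p => F (p.1, -p.2)) unitDisk := by
  have h := (measurePreserving_prodMap_id_neg.integrableOn_comp_preimage
    measurableEmbedding_prodMap_id_neg (f := F) (s := unitDisk)).2 hF
  rwa [preimage_prodMap_id_neg_unitDisk] at h

lemma setIntegral_unitDisk_comp_neg_snd (F : ℝ × ℝ → ℝ) :
    ∫ p in unitDisk, F (p.1, -p.2) = ∫ p in unitDisk, F p := by
  have h := measurePreserving_prodMap_id_neg.setIntegral_preimage_emb
    measurableEmbedding_prodMap_id_neg F unitDisk
  rwa [preimage_prodMap_id_neg_unitDisk] at h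

lemma SliceRegularOn.integral_sq_le {f : ℍ → ℍ} (hf : SliceRegularOn f B4) {i k : ℍ}
    (hi : Sph2 i) (hk : Sph2 k)
    (hint : IntegrableOn (fun p : ℝ × ℝ => ‖f (p.1 + p.2 • i)‖ ^ 2) unitDisk)
    {e : ℝ × ℝ → ℝ} (he : ∀ p ∈ unitDisk, |e p| ≤ ‖f (p.1 + p.2 • k)‖) :
    ∫ p in unitDisk, e p ^ 2 ≤ 4 * bergNormSqB i f := by
  have h := setIntegral_sq_le_of_abs_le_add (b := fun p => ‖f (p.1 + (-p.2) • i)‖)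
    isOpen_unitDisk.measurableSet hint (integrableOn_unitDisk_comp_neg_snd hint)
    fun p hp => (he p hp).trans (hf.norm_le hi hk hp)
  rw [setIntegral_unitDisk_comp_neg_snd (fun p => ‖f (p.1 + p.2 • i)‖ ^ 2)] at h
  rw [bergNormSqB]
  linarith

lemma SliceRegularOn.sub {f g : ℍ → ℍ} {Ω : Set ℍ} (hf : SliceRegularOn f Ω)
    (hg : SliceRegularOn g Ω) : SliceRegularOn (f - g) Ω := by
  intro j hj x y hxy
  obtain ⟨hfd, hfcr⟩ := hf hj x y hxy
  obtain ⟨hgd, hgcr⟩ := hg hj x y hxy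
  refine ⟨hfd.sub hgd, ?_⟩
  rw [fderiv_sub hfd hgd]
  simp only [FunLike.coe_sub, Pi.sub_apply, mul_sub]
  rw [sub_add_sub_comm, hfcr, hgcr, sub_zero]

lemma SliceRegularOn.continuousOn_sliceSet {f : ℍ → ℍ} {Ω : Set ℍ} (hf : SliceRegularOn f Ω)
    {j : ℍ} (hj : Sph2 j) :
    ContinuousOn (fun p : ℝ × ℝ => f (p.1 + p.2 • j)) (sliceSet Ω j) := fun p hp =>
  ContinuousAt.continuousWithinAt <|
    ContinuousAt.comp (g := f) (hf hj p.1 p.2 hp).1.continuousAt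
      ((Quaternion.continuous_coe.comp continuous_fst).add
        (continuous_snd.smul continuous_const)).continuousAt

lemma MemBergB.sub {i : ℍ} {f g : ℍ → ℍ} (hi : Sph2 i) (hf : MemBergB i f)
    (hg : MemBergB i g) : MemBergB i (f - g) := by
  refine ⟨hf.1.sub hg.1, ?_⟩
  have hcont := (hf.1.sub hg.1).continuousOn_sliceSet hi
  rw [hi.sliceSet_B4] at hcont
  refine ((hf.2.const_mul 2).add (hg.2.const_mul 2)).mono'
    ((hcont.norm.pow 2).aestronglyMeasurable isOpen_unitDisk.measurableSet)
    (Eventually.of_forall fun p => ?_)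
  set u := f (p.1 + p.2 • i)
  set v := g (p.1 + p.2 • i)
  simp only [Pi.sub_apply, Pi.add_apply, norm_pow, norm_norm]
  nlinarith [norm_sub_le u v, norm_nonneg (u - v), sq_nonneg (‖u‖ - ‖v‖)]

lemma MemBergB.L2D_re_mul_le {i k c : ℍ} {f : ℍ → ℍ} (hi : Sph2 i) (hk : Sph2 k)
    (hf : MemBergB i f) (hc : ‖c‖ = 1) :
    L2D (fun p => (Qsl f k p * c).re) ≤ 2 * bergNormB i f := by
  have h := hf.1.integral_sq_le hi hk hf.2 (e := fun p => (Qsl f k p * c).re) fun p _ => by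
    simpa [Qsl, norm_mul, hc] using Quaternion.abs_re_le_norm (Qsl f k p * c)
  calc L2D (fun p => (Qsl f k p * c).re) ≤ √(4 * bergNormSqB i f) := Real.sqrt_le_sqrt h
    _ = 2 * bergNormB i f := by
      rw [Real.sqrt_mul (by norm_num), show (4 : ℝ) = 2 ^ 2 by norm_num,
        Real.sqrt_sq (by norm_num), bergNormB]

lemma HLdist_Smap_le {i k l : ℍ} {f g : ℍ → ℍ} (hi : Sph2 i) (hk : Sph2 k) (hl : Sph2 l)
    (hf : MemBergB i f) (hg : MemBergB i g) :
    HLdist (Smap f k l) (Smap g k l) ≤ 8 * bergNormB i (f - g) := by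
  have hbound {c : ℍ} (hc : ‖c‖ = 1) := (hf.sub hi hg).L2D_re_mul_le hi hk hc
  have ha : (Smap f k l).a - (Smap g k l).a = fun p => (Qsl (f - g) k p * 1).re := by
    funext p; simp [Smap, Dc1, Qsl]
  have hb : (Smap f k l).b - (Smap g k l).b = fun p => (Qsl (f - g) k p * -k).re := by
    funext p; simp [Smap, Dc2, Qsl, sub_mul, -Quaternion.re_mul]; ring
  have hc : (Smap f k l).c - (Smap g k l).c = fun p => (Qsl (f - g) k p * -l).re := by
    funext p; simp [Smap, Dc3, Qsl, sub_mul, -Quaternion.re_mul]; ring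
  have hd : (Smap f k l).d - (Smap g k l).d = fun p => (Qsl (f - g) k p * (l * k)).re := by
    funext p; simp [Smap, Dc4, Qsl, sub_mul, -Quaternion.re_mul]
  have hlk : ‖l * k‖ = 1 := by rw [norm_mul, hl.2, hk.2, one_mul]
  rw [HLdist, ha, hb, hc, hd]
  simp only [Smap, sub_self, norm_zero, ne_eq, OfNat.ofNat_ne_zero, not_false_eq_true, zero_pow,
    add_zero, Real.sqrt_zero]
  linarith [hbound norm_one, hbound ((norm_neg k).trans hk.2),
    hbound ((norm_neg l).trans hl.2), hbound hlk]

/-- The section map `S_{k,l} : A_i(𝔹⁴) → HL(D)` is continuous. -/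
theorem section_continuous (i k l : ℍ) (hi : Sph2 i) (hkl : OrthPair k l) :
    ∀ f : ℍ → ℍ, MemBergB i f → ∀ ε : ℝ, 0 < ε → ∃ δ : ℝ, 0 < δ ∧
      ∀ g : ℍ → ℍ, MemBergB i g → bergNormB i (f - g) < δ →
        HLdist (Smap f k l) (Smap g k l) < ε := by
  intro f hf ε hε
  refine ⟨ε / 8, by positivity, fun g hg hfg => ?_⟩
  calc HLdist (Smap f k l) (Smap g k l) ≤ 8 * bergNormB i (f - g) :=
        HLdist_Smap_le hi hkl.1 hkl.2.1 hf hg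
    _ < ε := by linarith
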